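/- arXiv:1707.00973 — 6 statements merged into one kernel-verified Lean document; each statement's English description precedes it below -/
import Mathlib

section
/- Let (X,d) be a countable metric space, x₀ ∈ X, p ≥ 1, and s ∈ ℕ. Let h : X → ℝ with h_x ≥ 1 for all x, T : X → ℝ^s, and η ∈ ℝ^s. Assume: (1) λ(η) := ∑_{x∈X} h_x exp(⟨η, T_x⟩) < ∞, so that r_x := h_x exp(⟨η, T_x⟩)/λ(η) defines a probability vector (a standard exponential family member); (2) λ(η/2) = ∑_{x∈X} h_x exp(⟨η/2, T_x⟩) < ∞ (the natural parameter set is closed under multiplication by 1/2); (3) the p-th moment exists at the parameter η/2, i.e. ∑_{x∈X} d(x,x₀)^p h_x exp(⟨η/2, T_x⟩) < ∞. Then the summability condition ∑_{x∈X} d(x,x₀)^p √(r_x) < ∞ holds. -/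
/-- Theorem 3: sufficient conditions on a standard exponential family
`r_x = h_x exp(⟨η, T_x⟩) / λ(η)` for the summability condition to hold. -/
theorem statement7
    {X : Type*} [MetricSpace X] [Countable X] (x₀ : X)
    (p : ℝ) (hp : 1 ≤ p) (s : ℕ)
    (h : X → ℝ) (hh : ∀ x, 1 ≤ h x)
    (T : X → Fin s → ℝ) (η : Fin s → ℝ)
    (hLam : Summable fun x => h x * Real.exp (∑ i, η i * T x i))
    (hLamHalf : Summable fun x => h x * Real.exp (∑ i, (η i / 2) * T x i))
    (hmom : Summable fun x => dist x x₀ ^ p * (h x * Real.exp (∑ i, (η i / 2) * T x i))) :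
    Summable fun x => dist x x₀ ^ p *
      Real.sqrt (h x * Real.exp (∑ i, η i * T x i) /
        ∑' x', h x' * Real.exp (∑ i, η i * T x' i)) := by
  set lam := ∑' x', h x' * Real.exp (∑ i, η i * T x' i) with hlam
  have hbound : Summable fun x =>
      dist x x₀ ^ p * (h x * Real.exp (∑ i, (η i / 2) * T x i)) * (Real.sqrt lam)⁻¹ :=
    hmom.mul_right _
  apply Summable.of_nonneg_of_le (fun x => by positivity) _ hbound
  intro x
  have hhx : (0:ℝ) ≤ h x := le_trans zero_le_one (hh x)
  have hlam0 : (0:ℝ) ≤ lam := tsum_nonneg fun x =>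
    mul_nonneg (le_trans zero_le_one (hh x)) (Real.exp_pos _).le
  have hexp : ∑ i, (η i / 2) * T x i = (∑ i, η i * T x i) / 2 := by
    rw [Finset.sum_div]; exact Finset.sum_congr rfl fun i _ => by ring
  have hsqrth : Real.sqrt (h x) ≤ h x := by
    have h1 : 1 ≤ Real.sqrt (h x) := Real.one_le_sqrt.mpr (hh x)
    nlinarith [Real.sq_sqrt hhx]
  have hsqrtexp : Real.sqrt (Real.exp (∑ i, η i * T x i))
      = Real.exp (∑ i, (η i / 2) * T x i) := by
    rw [hexp, ← Real.exp_half]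
  have key : Real.sqrt (h x * Real.exp (∑ i, η i * T x i) / lam)
      ≤ h x * Real.exp (∑ i, (η i / 2) * T x i) * (Real.sqrt lam)⁻¹ := by
    rw [Real.sqrt_div (by positivity) lam, Real.sqrt_mul hhx, hsqrtexp, div_eq_mul_inv]
    gcongr
  calc dist x x₀ ^ p * Real.sqrt (h x * Real.exp (∑ i, η i * T x i) / lam)
      ≤ dist x x₀ ^ p * (h x * Real.exp (∑ i, (η i / 2) * T x i) * (Real.sqrt lam)⁻¹) := by
        gcongr
    _ = dist x x₀ ^ p * (h x * Real.exp (∑ i, (η i / 2) * T x i)) * (Real.sqrt lam)⁻¹ := by ring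
end

section
/- Let X = ℕ with the metric d(k,l) = √|k! − l!| and fix η > 1. Let r_k = η^k e^{−η}/k! be the Poisson(η) probability mass function. Then: (i) the first moment with respect to d exists, i.e. ∑_{k=0}^∞ d(k,0) · r_k = ∑_{k=1}^∞ √(k! − 1) · η^k e^{−η}/k! < ∞; but (ii) the summability condition fails: the family ( d(k,0) · √(r_k) )_{k∈ℕ} is not summable; in particular ∑_{k=1}^∞ √(k!) · √(η^k e^{−η}/k!) = ∑_{k=1}^∞ η^{k/2} e^{−η/2} = ∞. -/
/-!
Since `√(k!) · √(η^k e^{-η} / k!) = √η^k · e^{-η/2}`, the summability condition fails as soon as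
`η ≥ 1`, and `√(k! - 1) ≥ √(k!) / √2` for `k ≥ 2` transfers this to the metric `d`.  The first
moment is dominated by `e^{-η} η^k / √(k!)`, which is summable because `(4η²)^k / k! → 0` gives
`η^k / √(k!) ≤ 2^{-k}` eventually.
-/

open Filter Nat Real

lemma sqrt_pow_of_nonneg {x : ℝ} (hx : 0 ≤ x) (k : ℕ) : √(x ^ k) = √x ^ k := by
  rw [sqrt_eq_iff_eq_sq (by positivity) (by positivity), ← pow_mul, mul_comm, pow_mul,
    sq_sqrt hx]

lemma summable_pow_div_sqrt_factorial (x : ℝ) : Summable fun k : ℕ => x ^ k / √(k ! : ℝ) := by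
  have hsmall : ∀ᶠ k : ℕ in atTop, (4 * x ^ 2) ^ k / k ! ≤ 1 :=
    (FloorSemiring.tendsto_pow_div_factorial_atTop _).eventually (ge_mem_nhds one_pos)
  refine summable_geometric_two.of_norm_bounded_eventually_nat ?_
  filter_upwards [hsmall] with k hk
  have hfac : (0 : ℝ) < k ! := by positivity
  have hroot : (2 * |x|) ^ k ≤ √(k ! : ℝ) := by
    rw [le_sqrt (by positivity) hfac.le, ← pow_mul, mul_comm k, pow_mul, mul_pow, sq_abs]
    norm_num
    exact (div_le_one hfac).1 hk
  rw [norm_div, norm_pow, Real.norm_eq_abs, Real.norm_of_nonneg (sqrt_nonneg _),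
    div_le_iff₀ (sqrt_pos.2 hfac)]
  calc |x| ^ k = (1 / 2) ^ k * (2 * |x|) ^ k := by rw [← mul_pow]; ring
    _ ≤ (1 / 2) ^ k * √(k ! : ℝ) := by gcongr

lemma sqrt_mul_div_self_eq_div_sqrt (a t : ℝ) : √t * (a / t) = a / √t := by
  rw [mul_div_left_comm, sqrt_div_self', mul_one_div]

lemma summable_sqrt_factorial_sub_one_mul_pow_mul_div_factorial {η c : ℝ} (hη : 0 ≤ η)
    (hc : 0 ≤ c) :
    Summable fun k : ℕ => √((k ! : ℝ) - 1) * (η ^ k * c / k !) := by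
  refine ((summable_pow_div_sqrt_factorial η).mul_right c).of_nonneg_of_le
    (fun k => by positivity) fun k => ?_
  calc √((k ! : ℝ) - 1) * (η ^ k * c / k !) ≤ √(k ! : ℝ) * (η ^ k * c / k !) := by
        gcongr; linarith
    _ = η ^ k / √(k ! : ℝ) * c := by rw [sqrt_mul_div_self_eq_div_sqrt]; ring

lemma sqrt_factorial_mul_sqrt_pow_mul_div_factorial {η : ℝ} (hη : 0 ≤ η) (c : ℝ) (k : ℕ) :
    √(k ! : ℝ) * √(η ^ k * c / k !) = √η ^ k * √c := by
  have hfac : (0 : ℝ) < k ! := by positivity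
  rw [← sqrt_mul hfac.le, mul_div_cancel₀ _ hfac.ne', sqrt_mul (by positivity),
    sqrt_pow_of_nonneg hη]

lemma not_summable_sqrt_factorial_mul_sqrt_pow_mul_div_factorial {η c : ℝ} (hη : 1 ≤ η)
    (hc : 0 < c) :
    ¬ Summable fun k : ℕ => √(k ! : ℝ) * √(η ^ k * c / k !) := by
  simp_rw [sqrt_factorial_mul_sqrt_pow_mul_div_factorial (zero_le_one.trans hη),
    summable_mul_right_iff (sqrt_pos.2 hc).ne', summable_geometric_iff_norm_lt_one, not_lt,
    Real.norm_of_nonneg (sqrt_nonneg η), one_le_sqrt]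
  exact hη

lemma sqrt_le_sqrt_two_mul_sqrt_sub_one {t : ℝ} (ht : 2 ≤ t) : √t ≤ √2 * √(t - 1) := by
  rw [← sqrt_mul zero_le_two]
  exact sqrt_le_sqrt (by linarith)

lemma not_summable_sqrt_factorial_sub_one_mul_sqrt_pow_mul_div_factorial {η c : ℝ} (hη : 1 ≤ η)
    (hc : 0 < c) :
    ¬ Summable fun k : ℕ => √((k ! : ℝ) - 1) * √(η ^ k * c / k !) := by
  intro hsum
  refine not_summable_sqrt_factorial_mul_sqrt_pow_mul_div_factorial hη hc
    ((hsum.mul_left √2).of_norm_bounded_eventually_nat ?_)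
  filter_upwards [eventually_ge_atTop 2] with k hk
  have hfac : (2 : ℝ) ≤ k ! := by exact_mod_cast hk.trans (self_le_factorial k)
  rw [Real.norm_of_nonneg (by positivity), ← mul_assoc]
  gcongr
  exact sqrt_le_sqrt_two_mul_sqrt_sub_one hfac

/-- Example 2: on `ℕ` with the metric `d(k,l) = √|k! − l!|`, the
Poisson(η) distribution (η > 1) has a finite first moment w.r.t. `d`, but the
summability condition fails; in particular
`∑ √(k!) √(η^k e^{−η}/k!) = ∑ η^{k/2} e^{−η/2} = ∞`. -/
theorem statement9
    (η : ℝ) (hη : 1 < η) :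
    (Summable fun k : ℕ =>
      Real.sqrt ((k.factorial : ℝ) - 1) * (η ^ k * Real.exp (-η) / (k.factorial : ℝ))) ∧
    (¬ Summable fun k : ℕ =>
      Real.sqrt ((k.factorial : ℝ) - 1) *
        Real.sqrt (η ^ k * Real.exp (-η) / (k.factorial : ℝ))) ∧
    (¬ Summable fun k : ℕ =>
      Real.sqrt (k.factorial : ℝ) *
        Real.sqrt (η ^ k * Real.exp (-η) / (k.factorial : ℝ))) :=
  ⟨summable_sqrt_factorial_sub_one_mul_pow_mul_div_factorial (by linarith) (exp_pos _).le,
    not_summable_sqrt_factorial_sub_one_mul_sqrt_pow_mul_div_factorial hη.le (exp_pos _),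
    not_summable_sqrt_factorial_mul_sqrt_pow_mul_div_factorial hη.le (exp_pos _)⟩
end

section
/- Let f : ℝ → [0,∞) be a measurable probability density (∫_ℝ f = 1) with cumulative distribution function F(t) = ∫_{−∞}^t f(x) dx, let M be a positive integer, p ≥ 1, and define the binned probabilities r_k = F((k+1)/M) − F(k/M) for k ∈ ℤ. Then ∑_{k∈ℤ} |k/M|^p · √(r_k) ≥ √M · 2^{−p} · ∫_{ℝ \ [0, 1/M]} |x|^p √(f(x)) dx (both sides possibly infinite). In particular, if ∫_ℝ |x|^p √(f(x)) dx > 0, the left-hand side tends to infinity at rate √M as M → ∞, so the summability condition for the discretized measures cannot hold uniformly in the bin width. -/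
/-!
On each bin `(k/M, (k+1)/M]` Cauchy–Schwarz against the constant `1` gives
`∫ √f ≤ √(r_k) · √(1/M)`, and for `k ≠ 0` every point of the bin satisfies `|x| ≤ 2 |k/M|`, so
`∫_bin |x|^p √f ≤ 2^p |k/M|^p √(r_k) / √M`. Summing over the bins, which tile `ℝ`, gives the
claim; the bin `k = 0` lies inside `[0, 1/M]`, which is why that interval is excluded.
-/

open MeasureTheory Set Function

theorem lintegral_ofReal_sqrt_le {α : Type*} [MeasurableSpace α] {μ : Measure α}
    [IsFiniteMeasure μ] {f : α → ℝ} (hf0 : 0 ≤ᵐ[μ] f) (hf : Integrable f μ) :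
    ∫⁻ x, ENNReal.ofReal √(f x) ∂μ ≤ ENNReal.ofReal (√(∫ x, f x ∂μ) * √(μ.real univ)) := by
  have H := ENNReal.lintegral_mul_le_Lp_mul_Lq μ Real.HolderConjugate.two_two
    hf.aemeasurable.sqrt.ennreal_ofReal aemeasurable_const (g := fun _ => 1)
  have hsq : ∀ x, ENNReal.ofReal √(f x) ^ (2 : ℝ) = ENNReal.ofReal (f x) := by
    intro x
    rw [ENNReal.ofReal_rpow_of_nonneg (Real.sqrt_nonneg _) zero_le_two, Real.rpow_two,
      Real.sq_sqrt', ENNReal.ofReal_max, ENNReal.ofReal_zero]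
    exact max_eq_left zero_le
  simp only [Pi.mul_apply, mul_one, ENNReal.one_rpow, lintegral_one, hsq,
    ← ofReal_integral_eq_lintegral_ofReal hf hf0] at H
  refine H.trans_eq ?_
  rw [ENNReal.ofReal_mul (Real.sqrt_nonneg _), Real.sqrt_eq_rpow, Real.sqrt_eq_rpow,
    ← ENNReal.ofReal_rpow_of_nonneg (integral_nonneg_of_ae hf0) one_half_pos.le,
    ← ENNReal.ofReal_rpow_of_nonneg measureReal_nonneg one_half_pos.le, ofReal_measureReal]

theorem setLIntegral_ofReal_mul_sqrt_le {α : Type*} [MeasurableSpace α] {μ : Measure α}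
    {s : Set α} (hs : MeasurableSet s) (hμs : μ s ≠ ⊤) {f w : α → ℝ} {C : ℝ}
    (hf0 : 0 ≤ᵐ[μ.restrict s] f) (hf : IntegrableOn f s μ) (hw : ∀ x ∈ s, w x ≤ C) :
    ∫⁻ x in s, ENNReal.ofReal (w x * √(f x)) ∂μ ≤
      ENNReal.ofReal (C * (√(∫ x in s, f x ∂μ) * √(μ.real s))) := by
  have : IsFiniteMeasure (μ.restrict s) := isFiniteMeasure_restrict.2 hμs
  calc ∫⁻ x in s, ENNReal.ofReal (w x * √(f x)) ∂μ
      ≤ ∫⁻ x in s, ENNReal.ofReal C * ENNReal.ofReal √(f x) ∂μ :=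
        setLIntegral_mono' hs fun x hx => by
          rw [← ENNReal.ofReal_mul' (Real.sqrt_nonneg _)]
          exact ENNReal.ofReal_le_ofReal (by gcongr; exact hw x hx)
    _ ≤ ENNReal.ofReal C * ENNReal.ofReal (√(∫ x in s, f x ∂μ) * √(μ.real s)) := by
        rw [lintegral_const_mul' _ _ ENNReal.ofReal_ne_top, ← measureReal_restrict_apply_univ]
        gcongr
        exact lintegral_ofReal_sqrt_le hf0 hf
    _ = _ := (ENNReal.ofReal_mul' (by positivity)).symm

section GridBin

def gridBin (M : ℝ) (k : ℤ) : Set ℝ := Ioc (k / M) ((k + 1) / M)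

variable {M : ℝ} {f : ℝ → ℝ}

theorem iUnion_gridBin (hM : 0 < M) : ⋃ k, gridBin M k = univ := by
  simpa [gridBin, zsmul_eq_mul, div_eq_mul_inv] using iUnion_Ioc_zsmul (inv_pos.2 hM)

theorem pairwise_disjoint_gridBin : Pairwise (Disjoint on gridBin M) := by
  have h : gridBin M = fun k : ℤ => Ioc (0 + k • M⁻¹) (0 + (k + 1) • M⁻¹) := by
    ext k : 1
    simp [gridBin, div_eq_mul_inv]
  exact h ▸ pairwise_disjoint_Ioc_add_zsmul 0 M⁻¹

theorem measurableSet_gridBin (k : ℤ) : MeasurableSet (gridBin M k) := measurableSet_Ioc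

theorem volume_real_gridBin (hM : 0 < M) (k : ℤ) : volume.real (gridBin M k) = 1 / M := by
  rw [gridBin, Real.volume_real_Ioc_of_le (by gcongr; linarith)]
  ring

theorem gridBin_zero_subset : gridBin M 0 ⊆ Icc 0 (1 / M) := by
  simpa [gridBin] using Ioc_subset_Icc_self

theorem abs_le_two_mul_of_mem_gridBin (hM : 0 < M) {k : ℤ} (hk : k ≠ 0) {x : ℝ}
    (hx : x ∈ gridBin M k) : |x| ≤ 2 * |k / M| := by
  have hk1 : |(k : ℝ) + 1| ≤ 2 * |(k : ℝ)| := by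
    have : |k + 1| ≤ 2 * |k| := by
      rcases abs_cases k with h | h <;> rcases abs_cases (k + 1) with h' | h' <;> omega
    exact_mod_cast this
  calc |x| ≤ max |k / M| |(k + 1) / M| := abs_le_max_abs_abs hx.1.le hx.2
    _ ≤ 2 * |k / M| := by
      rw [abs_div, abs_div, abs_of_pos hM, ← mul_div_assoc]
      refine max_le ?_ ?_ <;> gcongr
      linarith [abs_nonneg (k : ℝ)]

theorem setLIntegral_eq_tsum_gridBin (hM : 0 < M) {s : Set ℝ} (hs : MeasurableSet s)
    (g : ℝ → ENNReal) :
    ∫⁻ x in s, g x = ∑' k, ∫⁻ x in gridBin M k ∩ s, g x := by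
  rw [← lintegral_iUnion (fun k => (measurableSet_gridBin k).inter hs)
    (pairwise_disjoint_gridBin.mono fun _ _ h => h.mono inter_subset_left inter_subset_left),
    ← iUnion_inter, iUnion_gridBin hM, univ_inter]

theorem integral_gridBin (hM : 0 < M) (hf : Integrable f) (k : ℤ) :
    ∫ x in gridBin M k, f x = (∫ x in Iic ((k + 1) / M), f x) - ∫ x in Iic (k / M), f x := by
  rw [intervalIntegral.integral_Iic_sub_Iic hf.integrableOn hf.integrableOn,
    intervalIntegral.integral_of_le (by gcongr; linarith), gridBin]

theorem mul_setLIntegral_gridBin_inter_compl_le (hM : 0 < M) {p : ℝ} (hp : 0 ≤ p)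
    (hf0 : ∀ x, 0 ≤ f x) (hf : Integrable f) (k : ℤ) :
    ENNReal.ofReal (√M * 2 ^ (-p)) *
        ∫⁻ x in gridBin M k ∩ (Icc 0 (1 / M))ᶜ, ENNReal.ofReal (|x| ^ p * √(f x)) ≤
      ENNReal.ofReal (|k / M| ^ p * √(∫ x in gridBin M k, f x)) := by
  rcases eq_or_ne k 0 with rfl | hk
  · rw [← sdiff_eq, sdiff_eq_empty.2 gridBin_zero_subset]
    simp
  have hbound := setLIntegral_ofReal_mul_sqrt_le (measurableSet_gridBin k) measure_Ioc_lt_top.ne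
    (.of_forall hf0) hf.integrableOn (C := (2 * |k / M|) ^ p)
    fun x hx => Real.rpow_le_rpow (abs_nonneg x) (abs_le_two_mul_of_mem_gridBin hM hk hx) hp
  rw [volume_real_gridBin hM] at hbound
  calc _ ≤ ENNReal.ofReal (√M * 2 ^ (-p)) *
        ENNReal.ofReal ((2 * |k / M|) ^ p * (√(∫ x in gridBin M k, f x) * √(1 / M))) := by
        gcongr
        exact (lintegral_mono_set inter_subset_left).trans hbound
    _ = _ := by
      rw [← ENNReal.ofReal_mul (by positivity)]
      have h2 : (2 : ℝ) ^ (-p) * 2 ^ p = 1 := by rw [← Real.rpow_add two_pos]; simp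
      have hM' : √M * √(1 / M) = 1 := by
        rw [← Real.sqrt_mul hM.le, mul_one_div_cancel hM.ne', Real.sqrt_one]
      congr 1
      rw [Real.mul_rpow zero_le_two (abs_nonneg _)]
      linear_combination (|k / M| ^ p * √(∫ x in gridBin M k, f x)) *
        (2 ^ (-p) * 2 ^ p * hM' + h2)

end GridBin

theorem statement10_general
    (f : ℝ → ℝ) (hf0 : ∀ x, 0 ≤ f x)
    (hfint : Integrable f)
    (M : ℕ) (hM : 0 < M) (p : ℝ) (hp : 1 ≤ p) :
    ENNReal.ofReal (Real.sqrt M * (2 : ℝ) ^ (-p)) *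
        ∫⁻ x in (Set.Icc (0 : ℝ) (1 / M))ᶜ, ENNReal.ofReal (|x| ^ p * Real.sqrt (f x)) ≤
      ∑' k : ℤ, ENNReal.ofReal (|(k : ℝ) / M| ^ p *
        Real.sqrt ((∫ x in Set.Iic (((k : ℝ) + 1) / M), f x) -
          ∫ x in Set.Iic ((k : ℝ) / M), f x)) := by
  have hMR : (0 : ℝ) < M := Nat.cast_pos.2 hM
  rw [setLIntegral_eq_tsum_gridBin hMR measurableSet_Icc.compl, ← ENNReal.tsum_mul_left]
  refine ENNReal.tsum_le_tsum fun k => ?_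
  rw [← integral_gridBin hMR hfint]
  exact mul_setLIntegral_gridBin_inter_compl_le hMR (by linarith) hf0 hfint k

/-- for the binning `r_k = F((k+1)/M) − F(k/M)` of a continuous
distribution with density `f` onto the grid `(k/M)_{k∈ℤ}`, the summability functional is
bounded below by `√M · 2^{−p} ∫_{ℝ∖[0,1/M]} |x|^p √(f x) dx` (both sides possibly
infinite, hence stated in `ℝ≥0∞`). -/
theorem statement10
    (f : ℝ → ℝ) (hfmeas : Measurable f) (hf0 : ∀ x, 0 ≤ f x)
    (hfint : Integrable f) (hf1 : ∫ x, f x = 1)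
    (M : ℕ) (hM : 0 < M) (p : ℝ) (hp : 1 ≤ p) :
    ENNReal.ofReal (Real.sqrt M * (2 : ℝ) ^ (-p)) *
        ∫⁻ x in (Set.Icc (0 : ℝ) (1 / M))ᶜ, ENNReal.ofReal (|x| ^ p * Real.sqrt (f x)) ≤
      ∑' k : ℤ, ENNReal.ofReal (|(k : ℝ) / M| ^ p *
        Real.sqrt ((∫ x in Set.Iic (((k : ℝ) + 1) / M), f x) -
          ∫ x in Set.Iic ((k : ℝ) / M), f x)) :=
  statement10_general f hf0 hfint M hM p hp
end

section
/- Let (x_k)_{k∈ℤ} be a strictly increasing sequence of real numbers and let r = (r_k)_{k∈ℤ} be a summable family of nonnegative reals with ∑_{k∈ℤ} r_k = 1, regarded as a probability measure putting mass r_k at x_k. Then ∑_{k∈ℤ} (x_{k+1} − x_k) · √( (∑_{j≤k} r_j) · (∑_{j>k} r_j) ) ≤ ∑_{k∈ℤ} |x_k − x_0| · √(r_k), where both sides are sums of nonnegative terms and may equal +∞. In particular, if the summability condition ∑_{k∈ℤ} |x_k − x_0| √(r_k) < ∞ holds, then the del Barrio–Giné–Matrán condition ∫_ℝ √(F(t)(1−F(t)))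 dt < ∞ holds for the cumulative distribution function F of this measure, since the integral equals the left-hand sum. -/
/-!
Write `F_k = ∑_{j ≤ k} r_j` and `1 - F_k = ∑_{j > k} r_j`. Both are at most `1`, so
`√(F_k (1 - F_k))` is at most the square root of the mass on the side of `k` away from `0`,
and by subadditivity of `√` at most `∑ √r_j` over that side. Exchanging the order of summation,
the atom `j` collects the increments `x_{k+1} - x_k` over the `k` between `0` and `j`,
which telescope to `|x_j - x_0|`.
-/

open ENNReal Finset

theorem ENNReal.tsum_sq_le_sq_tsum {ι : Type*} (g : ι → ℝ≥0∞) :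
    ∑' i, g i ^ 2 ≤ (∑' i, g i) ^ 2 :=
  calc ∑' i, g i ^ 2 ≤ ∑' i, g i * ∑' j, g j :=
        ENNReal.tsum_le_tsum fun i => by rw [sq]; gcongr; exact ENNReal.le_tsum i
    _ = (∑' i, g i) ^ 2 := by rw [ENNReal.tsum_mul_right, sq]

theorem ENNReal.ofReal_sqrt_tsum_le {ι : Type*} {r : ι → ℝ} (hr0 : ∀ i, 0 ≤ r i)
    (hr : Summable r) :
    ENNReal.ofReal √(∑' i, r i) ≤ ∑' i, ENNReal.ofReal √(r i) := by
  rw [← ENNReal.pow_le_pow_left_iff two_ne_zero]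
  calc ENNReal.ofReal √(∑' i, r i) ^ 2 = ∑' i, ENNReal.ofReal √(r i) ^ 2 := by
        simp only [← ENNReal.ofReal_pow (Real.sqrt_nonneg _), Real.sq_sqrt (hr0 _),
          Real.sq_sqrt (tsum_nonneg hr0), ENNReal.ofReal_tsum_of_nonneg hr0 hr]
    _ ≤ _ := ENNReal.tsum_sq_le_sq_tsum _

theorem Summable.ite_zero {ι α : Type*} [UniformSpace α] [AddCommGroup α]
    [IsUniformAddGroup α] [CompleteSpace α] {f : ι → α} (hf : Summable f)
    (P : ι → Prop) [DecidablePred P] :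
    Summable fun i => if P i then f i else 0 :=
  (hf.indicator {i | P i}).congr fun i => by simp [Set.indicator_apply]

section Mass

variable {ι : Type*} {r : ι → ℝ}

theorem ofReal_sqrt_tsum_ite_le (hr0 : ∀ i, 0 ≤ r i) (hr : Summable r)
    (P : ι → Prop) [DecidablePred P] :
    ENNReal.ofReal √(∑' i, if P i then r i else 0) ≤
      ∑' i, if P i then ENNReal.ofReal √(r i) else 0 := by
  convert ENNReal.ofReal_sqrt_tsum_le (fun i => by split_ifs <;> simp [hr0 i])
    (hr.ite_zero P) using 3 with i
  split_ifs <;> simp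

theorem ofReal_sqrt_mul_tsum_ite_le (hr0 : ∀ i, 0 ≤ r i) (hr1 : HasSum r 1)
    (P Q : ι → Prop) [DecidablePred P] [DecidablePred Q] :
    ENNReal.ofReal √((∑' i, if P i then r i else 0) * ∑' i, if Q i then r i else 0) ≤
      ∑' i, if Q i then ENNReal.ofReal √(r i) else 0 := by
  have hP_le_one : (∑' i, if P i then r i else 0) ≤ 1 :=
    hr1.tsum_eq ▸ (hr1.summable.ite_zero P).tsum_le_tsum
      (fun i => by split_ifs <;> simp [hr0 i]) hr1.summable
  have hQ_nonneg : 0 ≤ ∑' i, if Q i then r i else 0 :=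
    tsum_nonneg fun i => by split_ifs <;> simp [hr0 i]
  refine le_trans (ENNReal.ofReal_le_ofReal (Real.sqrt_le_sqrt ?_))
    (ofReal_sqrt_tsum_ite_le hr0 hr1.summable Q)
  exact mul_le_of_le_one_left hQ_nonneg hP_le_one

end Mass

theorem sum_Ico_min_max_sub_eq_abs {x : ℤ → ℝ} (hx : Monotone x) (i j : ℤ) :
    ∑ k ∈ Ico (min i j) (max i j), (x (k + 1) - x k) = |x j - x i| := by
  have telescope : ∀ m n, m ≤ n → ∑ k ∈ Ico m n, (x (k + 1) - x k) = x n - x m := by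
    intro m n hmn
    induction n, hmn using Int.leInduction with
    | base => simp
    | succ n hmn ih =>
      rw [← insert_Ico_right_eq_Ico_add_one hmn, sum_insert right_notMem_Ico, ih]
      ring
  rcases le_total i j with hij | hji
  · rw [min_eq_left hij, max_eq_right hij, telescope i j hij,
      abs_of_nonneg (sub_nonneg.2 (hx hij))]
  · rw [min_eq_right hji, max_eq_left hji, telescope j i hji,
      abs_of_nonpos (sub_nonpos.2 (hx hji)), neg_sub]

-- `j` lies on the side of `k` away from `0` exactly when `k` lies between `0` and `j`.
theorem ofReal_sqrt_cdf_mul_tail_le {r : ℤ → ℝ} (hr0 : ∀ k, 0 ≤ r k) (hr1 : HasSum r 1)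
    (k : ℤ) :
    ENNReal.ofReal √((∑' j : ℤ, if j ≤ k then r j else 0) *
        ∑' j : ℤ, if k < j then r j else 0) ≤
      ∑' j, if k ∈ Ico (min 0 j) (max 0 j) then ENNReal.ofReal √(r j) else 0 := by
  rcases le_or_gt 0 k with hk | hk
  · convert ofReal_sqrt_mul_tsum_ite_le hr0 hr1 (· ≤ k) (k < ·) using 3 with j
    exact if_congr (by rw [mem_Ico]; omega) rfl rfl
  · rw [mul_comm]
    convert ofReal_sqrt_mul_tsum_ite_le hr0 hr1 (k < ·) (· ≤ k) using 3 with j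
    exact if_congr (by rw [mem_Ico]; omega) rfl rfl

/-- for a probability measure on a strictly increasing countable subset
`(x_k)_{k∈ℤ}` of `ℝ`, the del Barrio–Giné–Matrán functional
`∑_k (x_{k+1} − x_k) √(F(x_k)(1 − F(x_k)))` is bounded by the summability functional
`∑_k |x_k − x_0| √(r_k)` (both sides possibly infinite, hence stated in `ℝ≥0∞`). -/
theorem statement11
    (x : ℤ → ℝ) (hx : StrictMono x)
    (r : ℤ → ℝ) (hr0 : ∀ k, 0 ≤ r k) (hr1 : HasSum r 1) :
    ∑' k : ℤ, ENNReal.ofReal ((x (k + 1) - x k) *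
        Real.sqrt ((∑' j : ℤ, if j ≤ k then r j else 0) *
          ∑' j : ℤ, if k < j then r j else 0)) ≤
      ∑' k : ℤ, ENNReal.ofReal (|x k - x 0| * Real.sqrt (r k)) := by
  have hincr : ∀ k, 0 ≤ x (k + 1) - x k := fun k => sub_nonneg.2 (hx.le_iff_le.2 (by omega))
  calc _ ≤ ∑' k, ∑' j, if k ∈ Ico (min 0 j) (max 0 j) then
          ENNReal.ofReal (x (k + 1) - x k) * ENNReal.ofReal √(r j) else 0 := by
        refine ENNReal.tsum_le_tsum fun k => ?_
        rw [ENNReal.ofReal_mul (hincr k)]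
        simp only [← mul_ite_zero, ENNReal.tsum_mul_left]
        gcongr
        exact ofReal_sqrt_cdf_mul_tail_le hr0 hr1 k
    _ = ∑' j, ∑' k, _ := ENNReal.tsum_comm
    _ = _ := by
        refine tsum_congr fun j => ?_
        rw [tsum_eq_sum (s := Ico (min 0 j) (max 0 j)) fun k hk => if_neg hk,
          sum_ite_of_true fun _ h => h,
          ← sum_mul, ← ENNReal.ofReal_sum_of_nonneg fun k _ => hincr k,
          sum_Ico_min_max_sub_eq_abs hx.monotone, ENNReal.ofReal_mul (abs_nonneg _)]
end

section
/- Let s ∈ (3,4], let Z(s) = ∑_{k=1}^∞ k^{−s} (finite), and consider the power-law probability vector r_k = k^{−s}/Z(s) on X = ℕ_{≥1} with the Euclidean distance. Then: (i) the del Barrio–Giné–Matrán condition holds: ∑_{k=1}^∞ √( (∑_{j=1}^k r_j) · (∑_{j=k+1}^∞ r_j) ) < ∞; but (ii) the summability condition fails: ∑_{k=1}^∞ (k−1) · √(r_k) = ∞, i.e. the family ((k−1)√(k^{−s}/Z(s)))_{k≥1} is not summable. -/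
/-! The tail `T k = ∑_{j > k} r_j` of the power law is of order `k^{1-s}`, so
`√(F T) ≤ √T` is summable exactly when `(s - 1) / 2 > 1`, i.e. `s > 3`; here the tail is
bounded by splitting `(j + k)^{-s} ≤ j^{-α} k^{-β}` with `α = (s - 1) / 2 > 1`, which gives the
slightly weaker but still summable `√T ≲ k^{-(s+1)/4}`. On the other hand
`(k - 1) √r_k ≍ k^{1 - s/2}` and `1 - s/2 ≥ -1` for `s ≤ 4`. -/

open Real

lemma Real.sqrt_rpow {x : ℝ} (hx : 0 ≤ x) (y : ℝ) : √(x ^ y) = x ^ (y / 2) := by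
  rw [sqrt_eq_rpow, ← rpow_mul hx]
  ring_nf

lemma summable_natCast_add_rpow_neg (c : ℕ) {p : ℝ} (hp : 1 < p) :
    Summable fun n : ℕ => ((n : ℝ) + c) ^ (-p) := by
  have h := (summable_nat_add_iff (f := fun n : ℕ => (n : ℝ) ^ (-p)) c).2
    (summable_nat_rpow.2 (by linarith))
  exact h.congr fun n => by push_cast; ring_nf

lemma rpow_neg_add_add_le_mul {a b c α β : ℝ} (ha : 0 ≤ a) (hb : 0 ≤ b) (hc : 0 < c)
    (hα : 0 ≤ α) (hβ : 0 ≤ β) :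
    (a + b + c) ^ (-(α + β)) ≤ (a + c) ^ (-α) * (b + c) ^ (-β) := by
  rw [neg_add, rpow_add (by positivity)]
  exact mul_le_mul (rpow_le_rpow_of_nonpos (by positivity) (by linarith) (by linarith))
    (rpow_le_rpow_of_nonpos (by positivity) (by linarith) (by linarith)) (by positivity)
    (by positivity)

lemma tsum_natCast_add_add_rpow_neg_le {α β : ℝ} (hα : 1 < α) (hβ : 0 ≤ β) (k : ℕ) :
    ∑' j : ℕ, ((j : ℝ) + k + 2) ^ (-(α + β)) ≤
      (∑' j : ℕ, ((j : ℝ) + 2) ^ (-α)) * ((k : ℝ) + 2) ^ (-β) := by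
  have hsum : Summable fun j : ℕ => ((j : ℝ) + k + 2) ^ (-(α + β)) :=
    (summable_natCast_add_rpow_neg (k + 2) (by linarith : 1 < α + β)).congr
      fun j => by push_cast; ring_nf
  rw [← tsum_mul_right]
  refine hsum.tsum_le_tsum (fun j => ?_)
    ((summable_natCast_add_rpow_neg 2 hα).mul_right _)
  exact_mod_cast rpow_neg_add_add_le_mul j.cast_nonneg k.cast_nonneg two_pos (by linarith) hβ

lemma summable_sqrt_tsum_natCast_add_add_rpow_neg {s : ℝ} (hs : 3 < s) :
    Summable fun k : ℕ => √(∑' j : ℕ, ((j : ℝ) + k + 2) ^ (-s)) := by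
  set C := ∑' j : ℕ, ((j : ℝ) + 2) ^ (-((s - 1) / 2))
  refine ((summable_natCast_add_rpow_neg 2 (by linarith : 1 < (s + 1) / 4)).mul_left √C)
    |>.of_nonneg_of_le (fun k => sqrt_nonneg _) fun k => ?_
  have htail := tsum_natCast_add_add_rpow_neg_le (by linarith : 1 < (s - 1) / 2)
    (by linarith : 0 ≤ (s + 1) / 2) k
  rw [show (s - 1) / 2 + (s + 1) / 2 = s by ring] at htail
  calc √(∑' j : ℕ, ((j : ℝ) + k + 2) ^ (-s))
      ≤ √(C * ((k : ℝ) + 2) ^ (-((s + 1) / 2))) := sqrt_le_sqrt htail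
    _ = √C * ((k : ℝ) + 2) ^ (-((s + 1) / 4)) := by
      rw [sqrt_mul (tsum_nonneg fun j => by positivity), sqrt_rpow (by positivity)]
      congr 2
      ring

lemma natCast_inv_le_four_mul_natCast_mul_rpow_neg {s : ℝ} (hs : s ≤ 4) (k : ℕ) :
    (k : ℝ)⁻¹ ≤ 4 * ((k : ℝ) * ((k : ℝ) + 1) ^ (-(s / 2))) := by
  rcases k.eq_zero_or_pos with rfl | hk
  · simp
  have hk1 : (1 : ℝ) ≤ k := by exact_mod_cast hk
  have hpow : ((k : ℝ) + 1) ^ (-(2 : ℝ)) ≤ ((k : ℝ) + 1) ^ (-(s / 2)) :=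
    rpow_le_rpow_of_exponent_le (by linarith) (by linarith)
  have hsq : ((k : ℝ) + 1) ^ (-(2 : ℝ)) = (((k : ℝ) + 1) ^ 2)⁻¹ := by
    rw [rpow_neg (by positivity), rpow_two]
  calc (k : ℝ)⁻¹ ≤ 4 * ((k : ℝ) * (((k : ℝ) + 1) ^ 2)⁻¹) := by
        rw [inv_le_iff_one_le_mul₀ (by positivity)]
        field_simp
        nlinarith
    _ ≤ 4 * ((k : ℝ) * ((k : ℝ) + 1) ^ (-(s / 2))) := by
        rw [← hsq]; gcongr

lemma not_summable_natCast_mul_rpow_neg {s : ℝ} (hs : s ≤ 4) :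
    ¬ Summable fun k : ℕ => (k : ℝ) * ((k : ℝ) + 1) ^ (-(s / 2)) := fun h =>
  not_summable_natCast_inv <| (h.mul_left 4).of_nonneg_of_le (fun k => by positivity)
    (natCast_inv_le_four_mul_natCast_mul_rpow_neg hs)

/-- Example 3: for the power law `r_k = k^{−s}/Z(s)` on `ℕ_{≥1}` with
`s ∈ (3,4]`, the del Barrio–Giné–Matrán condition holds but the summability condition
fails.  (The point `k ≥ 1` is represented by the index `k+1`, `k : ℕ`.) -/
theorem statement12
    (s : ℝ) (hs3 : 3 < s) (hs4 : s ≤ 4) :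
    (Summable fun k : ℕ => ((k : ℝ) + 1) ^ (-s)) ∧
    (Summable fun k : ℕ =>
      Real.sqrt
        ((∑ j ∈ Finset.range (k + 1), ((j : ℝ) + 1) ^ (-s) / ∑' i : ℕ, ((i : ℝ) + 1) ^ (-s)) *
          ∑' j : ℕ, ((j : ℝ) + (k : ℝ) + 2) ^ (-s) / ∑' i : ℕ, ((i : ℝ) + 1) ^ (-s))) ∧
    (¬ Summable fun k : ℕ =>
      (k : ℝ) * Real.sqrt (((k : ℝ) + 1) ^ (-s) / ∑' i : ℕ, ((i : ℝ) + 1) ^ (-s))) := by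
  have hg : Summable fun i : ℕ => ((i : ℝ) + 1) ^ (-s) := by
    simpa using summable_natCast_add_rpow_neg 1 (by linarith : 1 < s)
  set Z := ∑' i : ℕ, ((i : ℝ) + 1) ^ (-s)
  have hZ : 0 < Z := hg.tsum_pos (fun i => by positivity) 0 (by positivity)
  refine ⟨hg, ?_, ?_⟩
  · refine ((summable_sqrt_tsum_natCast_add_add_rpow_neg hs3).div_const √Z).of_nonneg_of_le
      (fun k => sqrt_nonneg _) fun k => ?_
    have hF₀ : 0 ≤ ∑ j ∈ Finset.range (k + 1), ((j : ℝ) + 1) ^ (-s) / Z :=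
      Finset.sum_nonneg fun j _ => by positivity
    have hF₁ : ∑ j ∈ Finset.range (k + 1), ((j : ℝ) + 1) ^ (-s) / Z ≤ 1 := by
      rw [← Finset.sum_div]
      exact div_le_one_of_le₀ (hg.sum_le_tsum _ fun i _ => by positivity) hZ.le
    rw [tsum_div_const, ← sqrt_div' _ hZ.le]
    exact sqrt_le_sqrt (mul_le_of_le_one_left (by positivity) hF₁)
  · have hterm : ∀ k : ℕ, (k : ℝ) * √(((k : ℝ) + 1) ^ (-s) / Z) =
        (k : ℝ) * ((k : ℝ) + 1) ^ (-(s / 2)) / √Z := fun k => by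
      rw [sqrt_div' _ hZ.le, sqrt_rpow (by positivity), mul_div_assoc, neg_div]
    simp_rw [hterm, summable_div_const_iff (sqrt_pos.2 hZ).ne']
    exact not_summable_natCast_mul_rpow_neg hs4
end

section
/- Let X be countable with a rooted weighted tree structure (root, parent, w) and induced tree metric d_T, and fix p ≥ 1. Let μ : X → ℝ be such that (μ_x)_{x∈X} is absolutely summable with ∑_{x∈X} μ_x = 0 and ∑_{x∈X} d_T(x, root)^p |μ_x| < ∞. Let S*_T = {λ : X → ℝ : max(|λ_{root}|, sup_{x ≠ root} d_T(x,root)^{−p} |λ_x|) < ∞ and λ_x − λ_{x'} ≤ d_T(x,x')^p for all x,x' ∈ X}. Then sup_{λ ∈ S*_T} ∑_{x∈X} μ_x λ_x = ∑_{x∈X, x≠root} | ∑_{x' ∈ children(x)} μ_{x'} | · d_T(x, parent(x))^p, and the supremum is attained (by λ with λ_{root} = 0 and λ_x − λ_{parent(x)} = sign(∑_{x'∈children(x)} μ_{x'}) · d_T(x,parent(x))^p). -/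
open MeasureTheory ProbabilityTheory Filter
open scoped ENNReal NNReal Classical

noncomputable section

/-- A rooted weighted tree structure on a (countable) set `X`: a root, a parent map under
which every point reaches the root in finitely many steps, and positive edge weights
`w x` for the edge `{x, parent x}` (`w root = 0`). -/
structure WRootedTree (X : Type*) where
  root : X
  parent : X → X
  w : X → ℝ
  parent_root : parent root = root
  parent_ne : ∀ x, x ≠ root → parent x ≠ x
  reaches : ∀ x, ∃ n, parent^[n] x = root
  w_root : w root = 0
  w_pos : ∀ x, x ≠ root → 0 < w x

namespace WRootedTree

variable {X : Type*} (T : WRootedTree X)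

/-- The depth of a vertex: the number of edges on the path to the root. -/
noncomputable def depth (x : X) : ℕ := Nat.find (T.reaches x)

/-- The tree distance from `x` to the root: the sum of the edge weights along the
path from `x` to the root. -/
noncomputable def distToRoot (x : X) : ℝ :=
  ∑ k ∈ Finset.range (T.depth x), T.w (T.parent^[k] x)

/-- `a` is an ancestor of `x` (possibly `a = x`). -/
def IsAncestor (a x : X) : Prop := ∃ n, T.parent^[n] x = a

lemma exists_ancestor_common (x y : X) : ∃ k, T.IsAncestor (T.parent^[k] x) y := by
  obtain ⟨n, hn⟩ := T.reaches x
  refine ⟨n, ?_⟩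
  unfold IsAncestor
  rw [hn]
  exact T.reaches y

/-- The lowest common ancestor of `x` and `y`: the nearest ancestor of `x` which is
also an ancestor of `y`. -/
noncomputable def lca (x y : X) : X :=
  T.parent^[Nat.find (T.exists_ancestor_common x y)] x

/-- The tree metric `d_T`: the sum of the edge weights along the unique path joining
`x` and `y`, computed via the lowest common ancestor. -/
noncomputable def treeDist (x y : X) : ℝ :=
  T.distToRoot x + T.distToRoot y - 2 * T.distToRoot (T.lca x y)

/-- `children x`: the set of descendants of `x` (including `x` itself). -/
def children (x : X) : Set X := {x' | ∃ n, T.parent^[n] x' = x}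

end WRootedTree

namespace WRootedTree

variable {X : Type*} (T : WRootedTree X)

/- ### auxiliary lemmas -/

lemma iterate_root (n : ℕ) : T.parent^[n] T.root = T.root :=
  Function.iterate_fixed T.parent_root n

lemma iterate_depth (x : X) : T.parent^[T.depth x] x = T.root := Nat.find_spec (T.reaches x)

lemma depth_le {x : X} {n : ℕ} (h : T.parent^[n] x = T.root) : T.depth x ≤ n :=
  Nat.find_le h

lemma iterate_eq_root {x : X} {n : ℕ} (h : T.depth x ≤ n) : T.parent^[n] x = T.root := by
  have hn : n = (n - T.depth x) + T.depth x := (Nat.sub_add_cancel h).symm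
  rw [hn, Function.iterate_add_apply, T.iterate_depth, T.iterate_root]

lemma iterate_ne_root {x : X} {n : ℕ} (h : n < T.depth x) : T.parent^[n] x ≠ T.root :=
  Nat.find_min (T.reaches x) h

lemma depth_root : T.depth T.root = 0 := (Nat.find_eq_zero _).2 rfl

lemma lt_depth_of_ne_root {x y : X} {n : ℕ} (h : T.parent^[n] x = y) (hy : y ≠ T.root) :
    n < T.depth x := by
  by_contra h'
  exact hy (h ▸ T.iterate_eq_root (le_of_not_gt h'))

lemma eq_root_of_cycle {y : X} {n : ℕ} (hn : 0 < n) (h : T.parent^[n] y = y) : y = T.root := by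
  have hm : T.parent^[n * T.depth y] y = y := by
    rw [Function.iterate_mul]; exact Function.iterate_fixed h _
  rw [← hm]; exact T.iterate_eq_root (Nat.le_mul_of_pos_left _ hn)

lemma iterate_eq_iterate {x : X} {j k : ℕ} (hj : T.parent^[j] x ≠ T.root)
    (h : T.parent^[j] x = T.parent^[k] x) : j = k := by
  rcases le_total j k with hle | hle
  · by_contra hne
    have hlt : 0 < k - j := by omega
    apply hj
    apply T.eq_root_of_cycle hlt
    rw [← Function.iterate_add_apply, Nat.sub_add_cancel hle, ← h]
  · by_contra hne
    have hlt : 0 < j - k := by omega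
    apply hj
    rw [h]
    apply T.eq_root_of_cycle hlt
    rw [← Function.iterate_add_apply, Nat.sub_add_cancel hle, h]
  done

lemma depth_parent {x : X} (hx : x ≠ T.root) : T.depth x = T.depth (T.parent x) + 1 := by
  have h0 : T.depth x ≠ 0 := by
    intro h
    apply hx
    have h1 := T.iterate_depth x
    rwa [h, Function.iterate_zero_apply] at h1
  obtain ⟨m, hm⟩ := Nat.exists_eq_succ_of_ne_zero h0
  have h1 : T.parent^[m] (T.parent x) = T.root := by
    have h2 := T.iterate_depth x
    rwa [hm, Function.iterate_succ_apply] at h2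
  have h2 : T.depth (T.parent x) ≤ m := T.depth_le h1
  have h3 : T.parent^[T.depth (T.parent x) + 1] x = T.root := by
    rw [Function.iterate_succ_apply]; exact T.iterate_depth (T.parent x)
  have h4 : T.depth x ≤ T.depth (T.parent x) + 1 := T.depth_le h3
  omega

lemma w_nonneg (x : X) : 0 ≤ T.w x := by
  by_cases hx : x = T.root
  · rw [hx, T.w_root]
  · exact (T.w_pos x hx).le

lemma distToRoot_nonneg (x : X) : 0 ≤ T.distToRoot x :=
  Finset.sum_nonneg fun k _ => T.w_nonneg _

lemma sum_split (f : X → ℝ) (hf : f T.root = 0) :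
    ∀ (n : ℕ) (y a : X), T.parent^[n] y = a →
      ∑ k ∈ Finset.range (T.depth y), f (T.parent^[k] y)
        = (∑ k ∈ Finset.range n, f (T.parent^[k] y))
          + ∑ k ∈ Finset.range (T.depth a), f (T.parent^[k] a) := by
  intro n
  induction n with
  | zero =>
    intro y a h
    simp only [Function.iterate_zero_apply] at h
    subst h
    simp
  | succ n ih =>
    intro y a h
    rw [Function.iterate_succ_apply] at h
    by_cases hy : y = T.root
    · subst hy
      have ha : a = T.root := by rw [← h, T.parent_root, T.iterate_root]
      subst ha
      simp [T.depth_root, T.iterate_root, hf]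
    · rw [T.depth_parent hy,
        Finset.sum_range_succ' (fun k => f (T.parent^[k] y)) (T.depth (T.parent y)),
        Finset.sum_range_succ' (fun k => f (T.parent^[k] y)) n]
      simp only [Function.iterate_succ_apply, Function.iterate_zero_apply]
      rw [ih (T.parent y) a h]
      ring

lemma distToRoot_split {n : ℕ} {y a : X} (h : T.parent^[n] y = a) :
    T.distToRoot y = (∑ k ∈ Finset.range n, T.w (T.parent^[k] y)) + T.distToRoot a :=
  T.sum_split T.w T.w_root n y a h

end WRootedTree

lemma add_rpow_le' {a b : ℝ} (ha : 0 ≤ a) (hb : 0 ≤ b) {p : ℝ} (hp : 1 ≤ p) :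
    a ^ p + b ^ p ≤ (a + b) ^ p := by
  have h := NNReal.add_rpow_le_rpow_add a.toNNReal b.toNNReal hp
  have h2 := NNReal.coe_le_coe.2 h
  push_cast [NNReal.coe_rpow, Real.coe_toNNReal _ ha, Real.coe_toNNReal _ hb] at h2
  exact h2

lemma sum_rpow_le' {ι : Type*} (s : Finset ι) (f : ι → ℝ) (hf : ∀ i ∈ s, 0 ≤ f i)
    {p : ℝ} (hp : 1 ≤ p) : ∑ i ∈ s, f i ^ p ≤ (∑ i ∈ s, f i) ^ p := by
  induction s using Finset.cons_induction with
  | empty => simp [Real.zero_rpow (by positivity : p ≠ 0)]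
  | cons a s ha ih =>
    rw [Finset.sum_cons, Finset.sum_cons]
    have h0 : ∀ i ∈ s, 0 ≤ f i := fun i hi => hf i (Finset.mem_cons_of_mem hi)
    calc f a ^ p + ∑ i ∈ s, f i ^ p ≤ f a ^ p + (∑ i ∈ s, f i) ^ p := by
          linarith [ih h0]
      _ ≤ (f a + ∑ i ∈ s, f i) ^ p :=
          add_rpow_le' (hf a (Finset.mem_cons_self a s)) (Finset.sum_nonneg h0) hp

namespace WRootedTree

variable {X : Type*} (T : WRootedTree X)

lemma distToRoot_succ {x : X} (hx : x ≠ T.root) :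
    T.distToRoot x = T.w x + T.distToRoot (T.parent x) := by
  have h := T.distToRoot_split (n := 1) (y := x) (a := T.parent x) (by simp)
  simpa using h

lemma lca_parent {x : X} (hx : x ≠ T.root) : T.lca x (T.parent x) = T.parent x := by
  unfold lca
  have h1 : Nat.find (T.exists_ancestor_common x (T.parent x)) = 1 := by
    have hle : Nat.find (T.exists_ancestor_common x (T.parent x)) ≤ 1 :=
      Nat.find_le ⟨0, by simp⟩
    have hne : Nat.find (T.exists_ancestor_common x (T.parent x)) ≠ 0 := by
      intro h0
      have hsp := Nat.find_spec (T.exists_ancestor_common x (T.parent x))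
      rw [h0] at hsp
      obtain ⟨n, hn⟩ := hsp
      simp only [Function.iterate_zero_apply] at hn
      apply hx
      apply T.eq_root_of_cycle (n := n + 1) (Nat.succ_pos n)
      rw [Function.iterate_succ_apply]
      exact hn
    omega
  rw [h1]
  simp

lemma lca_parent' {x : X} (hx : x ≠ T.root) : T.lca (T.parent x) x = T.parent x := by
  unfold lca
  have h0 : Nat.find (T.exists_ancestor_common (T.parent x) x) = 0 :=
    (Nat.find_eq_zero _).2 ⟨1, by simp⟩
  rw [h0]
  simp

lemma treeDist_parent {x : X} (hx : x ≠ T.root) : T.treeDist x (T.parent x) = T.w x := by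
  unfold treeDist
  rw [T.lca_parent hx, T.distToRoot_succ hx]
  ring

lemma treeDist_parent' {x : X} (hx : x ≠ T.root) : T.treeDist (T.parent x) x = T.w x := by
  unfold treeDist
  rw [T.lca_parent' hx, T.distToRoot_succ hx]
  ring

lemma abs_pathsum_le (g : X → ℝ) {p : ℝ} (hp : 1 ≤ p) (hg : ∀ y, |g y| ≤ T.w y ^ p)
    (n : ℕ) (x : X) :
    |∑ k ∈ Finset.range n, g (T.parent^[k] x)|
      ≤ (∑ k ∈ Finset.range n, T.w (T.parent^[k] x)) ^ p := by
  calc |∑ k ∈ Finset.range n, g (T.parent^[k] x)|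
      ≤ ∑ k ∈ Finset.range n, |g (T.parent^[k] x)| := Finset.abs_sum_le_sum_abs _ _
    _ ≤ ∑ k ∈ Finset.range n, T.w (T.parent^[k] x) ^ p :=
        Finset.sum_le_sum fun k _ => hg _
    _ ≤ (∑ k ∈ Finset.range n, T.w (T.parent^[k] x)) ^ p :=
        sum_rpow_le' _ _ (fun k _ => T.w_nonneg _) hp

lemma abs_pathsum_depth_le (g : X → ℝ) {p : ℝ} (hp : 1 ≤ p) (hg : ∀ y, |g y| ≤ T.w y ^ p)
    (x : X) :
    |∑ k ∈ Finset.range (T.depth x), g (T.parent^[k] x)| ≤ T.distToRoot x ^ p :=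
  T.abs_pathsum_le g hp hg (T.depth x) x

end WRootedTree

namespace WRootedTree

/-- The reindexing equivalence between pairs `(x, k)` with `k < depth x` and pairs
`(y, x)` with `y ≠ root` and `x` a descendant of `y` (via `y = parent^[k] x`). -/
def pathEquiv {X : Type*} (T : WRootedTree X) :
    {q : X × ℕ // q.2 < T.depth q.1} ≃ ((y : {x : X // x ≠ T.root}) × ↥(T.children y.1)) where
  toFun s := ⟨⟨T.parent^[s.1.2] s.1.1, T.iterate_ne_root s.2⟩, ⟨s.1.1, ⟨s.1.2, rfl⟩⟩⟩
  invFun b := ⟨(b.2.1, Nat.find b.2.2), T.lt_depth_of_ne_root (Nat.find_spec b.2.2) b.1.2⟩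
  left_inv := by
    rintro ⟨⟨x, k⟩, hk⟩
    apply Subtype.ext
    refine congrArg (Prod.mk x) ?_
    apply T.iterate_eq_iterate
    · rw [Nat.find_spec (⟨k, rfl⟩ : ∃ n, T.parent^[n] x = T.parent^[k] x)]
      exact T.iterate_ne_root hk
    · exact Nat.find_spec (⟨k, rfl⟩ : ∃ n, T.parent^[n] x = T.parent^[k] x)
  right_inv := by
    rintro ⟨⟨y, hy⟩, ⟨x, hx⟩⟩
    apply Sigma.subtype_ext
    · exact Subtype.ext (Nat.find_spec hx)
    · rfl

set_option maxHeartbeats 1000000 in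
lemma pair {X : Type*} [Countable X] (T : WRootedTree X) {p : ℝ} (hp : 1 ≤ p)
    (μ : X → ℝ) (hμsum : Summable μ)
    (hμmom : Summable fun x => T.distToRoot x ^ p * |μ x|)
    (g : X → ℝ) (hg : ∀ y, |g y| ≤ T.w y ^ p) :
    Summable (fun x => μ x * ∑ k ∈ Finset.range (T.depth x), g (T.parent^[k] x)) ∧
    Summable (fun y : {x : X // x ≠ T.root} => g y.1 * ∑' x' : T.children y.1, μ (x' : X)) ∧
    ∑' x, μ x * ∑ k ∈ Finset.range (T.depth x), g (T.parent^[k] x)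
      = ∑' y : {x : X // x ≠ T.root}, g y.1 * ∑' x' : T.children y.1, μ (x' : X) := by
  have hbound' : Summable fun x => |μ x| * T.distToRoot x ^ p := by
    simpa [mul_comm] using hμmom
  have hΛ : ∀ x, |∑ k ∈ Finset.range (T.depth x), g (T.parent^[k] x)| ≤ T.distToRoot x ^ p :=
    T.abs_pathsum_depth_le g hp hg
  -- summability of the left-hand side
  have hsum1 : Summable fun x => μ x * ∑ k ∈ Finset.range (T.depth x), g (T.parent^[k] x) := by
    apply Summable.of_abs
    apply Summable.of_nonneg_of_le (fun x => abs_nonneg _) (fun x => ?_) hbound'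
    rw [abs_mul]
    exact mul_le_mul_of_nonneg_left (hΛ x) (abs_nonneg _)
  -- the doubly-indexed function and its dominating function
  set F : X × ℕ → ℝ :=
    fun q => if q.2 < T.depth q.1 then μ q.1 * g (T.parent^[q.2] q.1) else 0 with hF
  set F' : X × ℕ → ℝ :=
    fun q => if q.2 < T.depth q.1 then |μ q.1| * T.w (T.parent^[q.2] q.1) ^ p else 0 with hF'
  have hF'nonneg : 0 ≤ F' := by
    intro q
    by_cases h : q.2 < T.depth q.1
    · simp only [hF', if_pos h]
      exact mul_nonneg (abs_nonneg _) (Real.rpow_nonneg (T.w_nonneg _) p)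
    · simp [hF', if_neg h]
  have habsF : ∀ q, |F q| ≤ F' q := by
    intro q
    by_cases h : q.2 < T.depth q.1
    · simp only [hF, hF', if_pos h, abs_mul]
      exact mul_le_mul_of_nonneg_left (hg _) (abs_nonneg _)
    · simp [hF, hF', if_neg h]
  have hvanish' : ∀ x : X, ∀ k ∉ Finset.range (T.depth x), F' (x, k) = 0 := by
    intro x k hk
    rw [Finset.mem_range] at hk
    simp [hF', if_neg hk]
  have hvanish : ∀ x : X, ∀ k ∉ Finset.range (T.depth x), F (x, k) = 0 := by
    intro x k hk
    rw [Finset.mem_range] at hk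
    simp [hF, if_neg hk]
  have hF'sum : Summable F' := by
    apply (summable_prod_of_nonneg hF'nonneg).2
    refine ⟨fun x => summable_of_ne_finset_zero (hvanish' x), ?_⟩
    apply Summable.of_nonneg_of_le (fun x => tsum_nonneg fun k => hF'nonneg (x, k))
      (fun x => ?_) hbound'
    rw [tsum_eq_sum (hvanish' x)]
    have hcong : ∀ k ∈ Finset.range (T.depth x),
        F' (x, k) = |μ x| * T.w (T.parent^[k] x) ^ p := by
      intro k hk
      rw [Finset.mem_range] at hk
      simp [hF', if_pos hk]
    rw [Finset.sum_congr rfl hcong, ← Finset.mul_sum]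
    apply mul_le_mul_of_nonneg_left _ (abs_nonneg _)
    exact sum_rpow_le' _ _ (fun k _ => T.w_nonneg _) hp
  have hFsum : Summable F :=
    Summable.of_abs (Summable.of_nonneg_of_le (fun q => abs_nonneg _) habsF hF'sum)
  -- step 2 : tsum over the product equals the LHS
  have hinner : ∀ x : X, ∑' k, F (x, k)
      = μ x * ∑ k ∈ Finset.range (T.depth x), g (T.parent^[k] x) := by
    intro x
    rw [tsum_eq_sum (hvanish x), Finset.mul_sum]
    apply Finset.sum_congr rfl
    intro k hk
    rw [Finset.mem_range] at hk
    simp [hF, if_pos hk]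
  have step2 : ∑' q, F q
      = ∑' x, μ x * ∑ k ∈ Finset.range (T.depth x), g (T.parent^[k] x) := by
    rw [Summable.tsum_prod' hFsum (fun x => summable_of_ne_finset_zero (hvanish x))]
    exact tsum_congr hinner
  -- the sigma-type reindexing
  set H : ((y : {x : X // x ≠ T.root}) × ↥(T.children y.1)) → ℝ :=
    fun b => μ b.2.1 * g b.1.1 with hH
  have hcomp : ∀ s : {q : X × ℕ // q.2 < T.depth q.1}, F s.1 = H (T.pathEquiv s) := by
    rintro ⟨⟨x, k⟩, hk⟩
    have hk' : k < T.depth x := hk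
    simp [hH, hF, pathEquiv, if_pos hk']
  have hHsum : Summable H := by
    rw [← (T.pathEquiv).summable_iff]
    exact (hFsum.subtype {q : X × ℕ | q.2 < T.depth q.1}).congr hcomp
  have hsupp : Function.support F ⊆ {q : X × ℕ | q.2 < T.depth q.1} := by
    intro q hq
    by_contra h
    have h' : ¬ q.2 < T.depth q.1 := h
    exact hq (by simp only [hF]; rw [if_neg h'])
  have step3 : ∑' q, F q = ∑' b, H b := by
    calc ∑' q, F q = ∑' s : {q : X × ℕ | q.2 < T.depth q.1}, F s.1 :=
          (tsum_subtype_eq_of_support_subset hsupp).symm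
      _ = ∑' s : {q : X × ℕ // q.2 < T.depth q.1}, H (T.pathEquiv s) := tsum_congr hcomp
      _ = ∑' b, H b := Equiv.tsum_eq _ H
  -- inner summability on each fiber of the sigma type
  have hfiber : ∀ y : {x : X // x ≠ T.root},
      Summable fun x' : T.children y.1 => H ⟨y, x'⟩ := by
    intro y
    have h1 : Summable fun x' : T.children y.1 => μ (x' : X) :=
      hμsum.subtype (T.children y.1)
    exact (h1.mul_right (g y.1)).congr (fun x' => by rw [hH])
  have hHy : ∀ y : {x : X // x ≠ T.root},
      ∑' x' : T.children y.1, H ⟨y, x'⟩ = g y.1 * ∑' x' : T.children y.1, μ (x' : X) := by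
    intro y
    simp only [hH]
    rw [tsum_mul_right, mul_comm]
  have step4 : ∑' b, H b
      = ∑' y : {x : X // x ≠ T.root}, g y.1 * ∑' x' : T.children y.1, μ (x' : X) := by
    rw [Summable.tsum_sigma' hfiber hHsum]
    exact tsum_congr hHy
  have hsum2 : Summable
      (fun y : {x : X // x ≠ T.root} => g y.1 * ∑' x' : T.children y.1, μ (x' : X)) :=
    hHsum.sigma.congr hHy
  exact ⟨hsum1, hsum2, by rw [← step2, step3, step4]⟩

end WRootedTree


set_option maxHeartbeats 1000000 in
/-- explicit form of the dual optimization on a weighted tree: for a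
summable, mean-zero `μ` with finite `p`-th tree moment,
`sup_{λ ∈ S*_T} ⟨μ,λ⟩ = ∑_{x ≠ root} |∑_{x' ∈ children(x)} μ_{x'}| d_T(x, parent x)^p`,
and the supremum is attained. -/
theorem statement14
    {X : Type*} [Countable X] (T : WRootedTree X)
    (p : ℝ) (hp : 1 ≤ p) (μ : X → ℝ)
    (hμabs : Summable fun x => |μ x|) (hμ0 : HasSum μ 0)
    (hμmom : Summable fun x => T.distToRoot x ^ p * |μ x|) :
    IsGreatest
      ((fun l => ∑' x, μ x * l x) ''
        {l : X → ℝ |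
          (∃ C : ℝ, |l T.root| ≤ C ∧ ∀ x, x ≠ T.root → |l x| ≤ C * T.distToRoot x ^ p) ∧
          ∀ x x', l x - l x' ≤ T.treeDist x x' ^ p})
      (∑' x : {x : X // x ≠ T.root}, |∑' x' : T.children x.1, μ x'| * T.w x.1 ^ p) := by
  have hp0 : (0:ℝ) < p := lt_of_lt_of_le one_pos hp
  have hpne : p ≠ 0 := ne_of_gt hp0
  have hμsum : Summable μ := hμ0.summable
  -- summability of the right-hand side, via `pair` applied to `|μ|` and `w ^ p`
  have hμ'mom : Summable fun x => T.distToRoot x ^ p * |(|μ x|)| := by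
    simpa [abs_abs] using hμmom
  obtain ⟨-, hsum2', -⟩ := T.pair hp (fun x => |μ x|) hμabs hμ'mom (fun y => T.w y ^ p)
    (fun y => by rw [abs_of_nonneg (Real.rpow_nonneg (T.w_nonneg y) p)])
  have habs_tsum : ∀ y : {x : X // x ≠ T.root},
      |∑' x' : T.children y.1, μ (x' : X)| ≤ ∑' x' : T.children y.1, |μ (x' : X)| := by
    intro y
    have hs : Summable fun x' : T.children y.1 => |μ (x' : X)| := hμabs.subtype _
    calc |∑' x' : T.children y.1, μ (x' : X)|
        = ‖∑' x' : T.children y.1, μ (x' : X)‖ := (Real.norm_eq_abs _).symm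
      _ ≤ ∑' x' : T.children y.1, ‖μ (x' : X)‖ :=
          norm_tsum_le_tsum_norm (by simpa [Real.norm_eq_abs] using hs)
      _ = ∑' x' : T.children y.1, |μ (x' : X)| := by simp [Real.norm_eq_abs]
  have hRHS : Summable (fun y : {x : X // x ≠ T.root} =>
      |∑' x' : T.children y.1, μ (x' : X)| * T.w y.1 ^ p) := by
    apply Summable.of_nonneg_of_le
      (fun y => mul_nonneg (abs_nonneg _) (Real.rpow_nonneg (T.w_nonneg _) _))
      (fun y => ?_) hsum2'
    rw [mul_comm]
    exact mul_le_mul_of_nonneg_left (habs_tsum y) (Real.rpow_nonneg (T.w_nonneg _) _)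
  constructor
  · -- attainment
    set s : X → ℝ := fun y => if (∑' x' : T.children y, μ (x' : X)) < 0 then (-1:ℝ) else 1
      with hsdef
    set g : X → ℝ := fun y => s y * T.w y ^ p with hgdef
    have hgb : ∀ y, |g y| ≤ T.w y ^ p := by
      intro y
      simp only [hgdef]
      rw [abs_mul]
      have h1 : |s y| = 1 := by
        simp only [hsdef]
        split <;> simp
      rw [h1, one_mul, abs_of_nonneg (Real.rpow_nonneg (T.w_nonneg y) p)]
    have hgroot : g T.root = 0 := by
      simp [hgdef, T.w_root, Real.zero_rpow hpne]
    obtain ⟨hsum1, hsum2, heq⟩ := T.pair hp μ hμsum hμmom g hgb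
    set l : X → ℝ := fun x => ∑ k ∈ Finset.range (T.depth x), g (T.parent^[k] x) with hldef
    refine ⟨l, ⟨⟨1, ?_, ?_⟩, ?_⟩, ?_⟩
    · simp [hldef, T.depth_root]
    · intro x hx
      rw [one_mul]
      simp only [hldef]
      exact T.abs_pathsum_depth_le g hp hgb x
    · -- the Lipschitz condition
      intro x x'
      have hax : T.parent^[Nat.find (T.exists_ancestor_common x x')] x = T.lca x x' := rfl
      have hspec := Nat.find_spec (T.exists_ancestor_common x x')
      rw [hax] at hspec
      obtain ⟨n, hn⟩ := hspec
      set m := Nat.find (T.exists_ancestor_common x x') with hm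
      have hgx := T.sum_split g hgroot m x (T.lca x x') hax
      have hgx' := T.sum_split g hgroot n x' (T.lca x x') hn
      have hwx := T.distToRoot_split hax
      have hwx' := T.distToRoot_split hn
      have hdist : T.treeDist x x' = (∑ k ∈ Finset.range m, T.w (T.parent^[k] x))
          + ∑ k ∈ Finset.range n, T.w (T.parent^[k] x') := by
        unfold WRootedTree.treeDist
        rw [hwx, hwx']
        ring
      have h1 : l x - l x' = (∑ k ∈ Finset.range m, g (T.parent^[k] x))
          - ∑ k ∈ Finset.range n, g (T.parent^[k] x') := by
        simp only [hldef]
        rw [hgx, hgx']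
        ring
      rw [h1, hdist]
      have hA := T.abs_pathsum_le g hp hgb m x
      have hB := T.abs_pathsum_le g hp hgb n x'
      have hAnn : 0 ≤ ∑ k ∈ Finset.range m, T.w (T.parent^[k] x) :=
        Finset.sum_nonneg fun k _ => T.w_nonneg _
      have hBnn : 0 ≤ ∑ k ∈ Finset.range n, T.w (T.parent^[k] x') :=
        Finset.sum_nonneg fun k _ => T.w_nonneg _
      calc (∑ k ∈ Finset.range m, g (T.parent^[k] x))
            - ∑ k ∈ Finset.range n, g (T.parent^[k] x')
          ≤ |∑ k ∈ Finset.range m, g (T.parent^[k] x)|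
            + |∑ k ∈ Finset.range n, g (T.parent^[k] x')| := by
            have e1 := le_abs_self (∑ k ∈ Finset.range m, g (T.parent^[k] x))
            have e2 := neg_abs_le (∑ k ∈ Finset.range n, g (T.parent^[k] x'))
            linarith
        _ ≤ (∑ k ∈ Finset.range m, T.w (T.parent^[k] x)) ^ p
            + (∑ k ∈ Finset.range n, T.w (T.parent^[k] x')) ^ p := add_le_add hA hB
        _ ≤ ((∑ k ∈ Finset.range m, T.w (T.parent^[k] x))
            + ∑ k ∈ Finset.range n, T.w (T.parent^[k] x')) ^ p := add_rpow_le' hAnn hBnn hp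
    · -- the value of the pairing
      show (∑' x, μ x * l x) = _
      simp only [hldef]
      rw [heq]
      apply tsum_congr
      intro y
      simp only [hgdef, hsdef]
      split_ifs with h
      · rw [abs_of_neg h]
        ring
      · rw [abs_of_nonneg (not_lt.mp h)]
        ring
  · -- upper bound
    rintro v ⟨l, ⟨-, hLip⟩, rfl⟩
    show (∑' x, μ x * l x) ≤ _
    set g : X → ℝ := fun y => l y - l (T.parent y) with hgdef
    have hgb : ∀ y, |g y| ≤ T.w y ^ p := by
      intro y
      by_cases hy : y = T.root
      · subst hy
        simp [hgdef, T.parent_root, T.w_root, Real.zero_rpow hpne]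
      · simp only [hgdef]
        rw [abs_le]
        constructor
        · have h2 := hLip (T.parent y) y
          rw [T.treeDist_parent' hy] at h2
          linarith
        · have h2 := hLip y (T.parent y)
          rw [T.treeDist_parent hy] at h2
          exact h2
    obtain ⟨hsum1, hsum2, heq⟩ := T.pair hp μ hμsum hμmom g hgb
    have htel : ∀ x, ∑ k ∈ Finset.range (T.depth x), g (T.parent^[k] x) = l x - l T.root := by
      intro x
      have h1 : ∀ k ∈ Finset.range (T.depth x), g (T.parent^[k] x)
          = l (T.parent^[k] x) - l (T.parent^[k+1] x) := by
        intro k _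
        simp only [hgdef]
        rw [Function.iterate_succ_apply']
      rw [Finset.sum_congr rfl h1, Finset.sum_range_sub' (fun k => l (T.parent^[k] x)),
        Function.iterate_zero_apply, T.iterate_depth]
    have hsumc : Summable fun x => μ x * l T.root := hμsum.mul_right _
    have hval : ∑' x, μ x * l x
        = ∑' y : {x : X // x ≠ T.root}, g y.1 * ∑' x' : T.children y.1, μ (x' : X) := by
      calc ∑' x, μ x * l x
          = ∑' x, (μ x * ∑ k ∈ Finset.range (T.depth x), g (T.parent^[k] x)
              + μ x * l T.root) := by
            apply tsum_congr
            intro x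
            rw [htel x]
            ring
        _ = (∑' x, μ x * ∑ k ∈ Finset.range (T.depth x), g (T.parent^[k] x))
              + ∑' x, μ x * l T.root := Summable.tsum_add hsum1 hsumc
        _ = (∑' y : {x : X // x ≠ T.root}, g y.1 * ∑' x' : T.children y.1, μ (x' : X))
              + (∑' x, μ x) * l T.root := by rw [heq, tsum_mul_right]
        _ = ∑' y : {x : X // x ≠ T.root}, g y.1 * ∑' x' : T.children y.1, μ (x' : X) := by
            rw [hμ0.tsum_eq]
            ring
    rw [hval]
    apply Summable.tsum_le_tsum _ hsum2 hRHS
    intro y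
    calc g y.1 * ∑' x' : T.children y.1, μ (x' : X)
        ≤ |g y.1 * ∑' x' : T.children y.1, μ (x' : X)| := le_abs_self _
      _ = |g y.1| * |∑' x' : T.children y.1, μ (x' : X)| := abs_mul _ _
      _ ≤ T.w y.1 ^ p * |∑' x' : T.children y.1, μ (x' : X)| :=
          mul_le_mul_of_nonneg_right (hgb y.1) (abs_nonneg _)
      _ = |∑' x' : T.children y.1, μ (x' : X)| * T.w y.1 ^ p := mul_comm _ _
end
end
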